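/- arXiv:2308.01623 — 2 statements merged into one kernel-verified Lean document; each statement's English description precedes it below -/
import Mathlib

section
/- (Completeness of infinite-valued Łukasiewicz propositional logic, Theorem 4) For every formula φ of propositional Łukasiewicz logic, if ⊨ φ (i.e. V(φ) = 1 for every valuation V), then ⊢ φ (φ is derivable in the Hilbert system Ł). -/
/-!
If `φ` is not provable, Zorn's lemma gives a theory `Φ` that is maximal among those not proving
`φ`. By the local deduction theorem and prelinearity (A6), `Φ` proves `A → B` or `B → A` for all
`A`, `B`, so its Lindenbaum algebra is an MV-chain in which the class of `φ` lies below `⊤`.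
Chang's construction realises any MV-chain as the unit interval `[0, u]` of a linearly ordered
abelian group, where `→` and `&` become `min u (u - a + b)` and `max 0 (a + b - u)`. Finitely many
strict inequalities in such a group are kept by some homomorphism to `ℚ`: otherwise Gordan's
alternative, proved by Fourier–Motzkin elimination, yields a vanishing positive integer
combination of positive elements. Scaling `u` to `1` turns this homomorphism into a valuation `V`
with `V(φ) < 1`.
-/

/-- Formulas of propositional Łukasiewicz logic: propositional variables,
the constant `⊥`, strong conjunction `&` and implication `→`. -/
inductive LFormula : Type
  | var : ℕ → LFormula
  | bot : LFormula
  | conj : LFormula → LFormula → LFormula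
  | impl : LFormula → LFormula → LFormula

namespace LFormula

/-- Negation is the abbreviation `¬φ := φ → ⊥`. -/
def neg (φ : LFormula) : LFormula := impl φ bot

end LFormula

/-- Hilbert-style provability for Łukasiewicz logic `Ł` from a set of premises:
modus ponens together with the axiom schemes (A1)–(A7) and double negation. -/
inductive LProof : Set LFormula → LFormula → Prop
  | prem {Γ : Set LFormula} {φ : LFormula} : φ ∈ Γ → LProof Γ φ
  | a1 {Γ : Set LFormula} (φ ψ χ : LFormula) :
      LProof Γ ((φ.impl ψ).impl ((ψ.impl χ).impl (φ.impl χ)))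
  | a2 {Γ : Set LFormula} (φ ψ : LFormula) : LProof Γ ((φ.conj ψ).impl φ)
  | a3 {Γ : Set LFormula} (φ ψ : LFormula) : LProof Γ ((φ.conj ψ).impl (ψ.conj φ))
  | a4 {Γ : Set LFormula} (φ ψ : LFormula) :
      LProof Γ ((φ.conj (φ.impl ψ)).impl (ψ.conj (ψ.impl φ)))
  | a5a {Γ : Set LFormula} (φ ψ χ : LFormula) :
      LProof Γ ((φ.impl (ψ.impl χ)).impl ((φ.conj ψ).impl χ))
  | a5b {Γ : Set LFormula} (φ ψ χ : LFormula) :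
      LProof Γ (((φ.conj ψ).impl χ).impl (φ.impl (ψ.impl χ)))
  | a6 {Γ : Set LFormula} (φ ψ χ : LFormula) :
      LProof Γ (((φ.impl ψ).impl χ).impl (((ψ.impl φ).impl χ).impl χ))
  | a7 {Γ : Set LFormula} (φ : LFormula) : LProof Γ (LFormula.bot.impl φ)
  | dn {Γ : Set LFormula} (φ : LFormula) : LProof Γ (φ.neg.neg.impl φ)
  | mp {Γ : Set LFormula} {φ ψ : LFormula} :
      LProof Γ (φ.impl ψ) → LProof Γ φ → LProof Γ ψ

/-- `listConj φ [ψ₁, …, ψₙ]` is the strong conjunction `φ & ψ₁ & ⋯ & ψₙ`. -/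
def listConj : LFormula → List LFormula → LFormula
  | φ, [] => φ
  | φ, ψ :: l => LFormula.conj φ (listConj ψ l)

/-- A set `Γ` is consistent if for every finite nonempty collection
`φ, ψ₁, …, ψₙ` of its members, `⊬ ¬(φ & ψ₁ & ⋯ & ψₙ)`. -/
def Consistent (Γ : Set LFormula) : Prop :=
  ∀ (φ : LFormula) (l : List LFormula), φ ∈ Γ → (∀ ψ ∈ l, ψ ∈ Γ) →
    ¬ LProof ∅ (listConj φ l).neg

/-- A consistent set `Φ` is maximal if adjoining any formula `ψ ∉ Φ`
yields an inconsistent set. -/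
def MaximalConsistent (Φ : Set LFormula) : Prop :=
  Consistent Φ ∧ ∀ ψ : LFormula, ψ ∉ Φ → ¬ Consistent (Φ ∪ {ψ})

/-- Evaluation of formulas in `[0,1]` determined by the values `π` of the
propositional variables. -/
def eval (π : ℕ → ℝ) : LFormula → ℝ
  | LFormula.var p => π p
  | LFormula.bot => 0
  | LFormula.conj φ ψ => max 0 (eval π φ + eval π ψ - 1)
  | LFormula.impl φ ψ => min 1 (1 - eval π φ + eval π ψ)

/-- A valuation assigns each propositional variable a value in `[0,1]`. -/
def IsValuation (π : ℕ → ℝ) : Prop := ∀ p : ℕ, 0 ≤ π p ∧ π p ≤ 1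

/-! ### Gordan's alternative and ordered abelian groups -/

section FourierMotzkin

section Field

variable {F : Type*} [Field F] {n : ℕ}

/-- The point where the segment `[u, w]` meets the hyperplane `v 0 = 0`. -/
def zeroCrossing (u w : Fin (n + 1) → F) : Fin (n + 1) → F :=
  (u 0 - w 0)⁻¹ • (u 0 • w - w 0 • u)

theorem zeroCrossing_apply_zero (u w : Fin (n + 1) → F) : zeroCrossing u w 0 = 0 := by
  simp [zeroCrossing, mul_comm]

theorem tail_zeroCrossing_dotProduct (u w : Fin (n + 1) → F) (y : Fin n → F) :
    Fin.tail (zeroCrossing u w) ⬝ᵥ y =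
      (u 0 - w 0)⁻¹ * (u 0 * (Fin.tail w ⬝ᵥ y) - w 0 * (Fin.tail u ⬝ᵥ y)) := by
  have : Fin.tail (zeroCrossing u w) = (u 0 - w 0)⁻¹ • (u 0 • Fin.tail w - w 0 • Fin.tail u) :=
    rfl
  simp [this, smul_dotProduct, sub_dotProduct]

theorem dotProduct_fin_cons (v : Fin (n + 1) → F) (s : F) (y : Fin n → F) :
    v ⬝ᵥ Fin.cons s y = v 0 * s + Fin.tail v ⬝ᵥ y := by
  simp [dotProduct, Fin.sum_univ_succ, Fin.tail]

end Field

variable {F : Type*} [Field F] [LinearOrder F] [IsStrictOrderedRing F] {n : ℕ}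

theorem zeroCrossing_mem_segment {u w : Fin (n + 1) → F} (hu : 0 < u 0) (hw : w 0 < 0) :
    zeroCrossing u w ∈ segment F u w := by
  have hd : 0 < u 0 - w 0 := by linarith
  refine ⟨-w 0 / (u 0 - w 0), u 0 / (u 0 - w 0), div_nonneg (by linarith) hd.le,
    div_nonneg hu.le hd.le, by field_simp; ring, ?_⟩
  simp only [zeroCrossing, smul_sub, smul_smul, div_eq_inv_mul]
  module

theorem zero_notMem_convexHull_image_tail {S T : Set (Fin (n + 1) → F)}
    (hS : (0 : Fin (n + 1) → F) ∉ convexHull F S) (hT : T ⊆ convexHull F S)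
    (hT₀ : ∀ v ∈ T, v 0 = 0) : (0 : Fin n → F) ∉ convexHull F (Fin.tail '' T) := by
  have hK : Convex F (convexHull F S ∩ {v | v 0 = 0}) :=
    (convex_convexHull F S).inter (convex_hyperplane (LinearMap.proj 0).isLinear 0)
  intro h
  rw [show Fin.tail '' T = LinearMap.funLeft F F Fin.succ '' T from rfl,
    ← LinearMap.image_convexHull] at h
  obtain ⟨z, hz, hz₀⟩ := h
  have hzK : z ∈ convexHull F S ∩ {v | v 0 = 0} :=
    convexHull_min (fun v hv => Set.mem_inter (hT hv) (hT₀ v hv)) hK hz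
  have : z = 0 := by
    funext i
    cases i using Fin.cases with
    | zero => exact hzK.2
    | succ j => exact congrFun hz₀ j
  exact hS (this ▸ hzK.1)

theorem lt_of_tail_zeroCrossing_dotProduct_pos {u w : Fin (n + 1) → F} (hu : 0 < u 0)
    (hw : w 0 < 0) {y : Fin n → F} (h : 0 < Fin.tail (zeroCrossing u w) ⬝ᵥ y) :
    -(Fin.tail u ⬝ᵥ y) / u 0 < -(Fin.tail w ⬝ᵥ y) / w 0 := by
  rw [tail_zeroCrossing_dotProduct] at h
  have h' := (mul_pos_iff_of_pos_left (inv_pos.2 (sub_pos.2 (hw.trans hu)))).1 h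
  rw [show -(Fin.tail w ⬝ᵥ y) / w 0 = Fin.tail w ⬝ᵥ y / -w 0 by rw [neg_div, div_neg],
    div_lt_div_iff₀ hu (neg_pos.2 hw)]
  linarith

theorem exists_dotProduct_fin_cons_pos (S : Finset (Fin (n + 1) → F)) (y : Fin n → F)
    (h₀ : ∀ v ∈ S, v 0 = 0 → 0 < Fin.tail v ⬝ᵥ y)
    (hcross : ∀ u ∈ S, ∀ w ∈ S, 0 < u 0 → w 0 < 0 → 0 < Fin.tail (zeroCrossing u w) ⬝ᵥ y) :
    ∃ s, ∀ v ∈ S, 0 < v ⬝ᵥ Fin.cons s y := by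
  classical
  obtain ⟨s, hsP, hsN⟩ := Order.exists_between_finsets
    ((S.filter (0 < · 0)).image fun u => -(Fin.tail u ⬝ᵥ y) / u 0)
    ((S.filter (· 0 < 0)).image fun w => -(Fin.tail w ⬝ᵥ y) / w 0) (by
      simp only [Finset.mem_image, Finset.mem_filter]
      rintro _ ⟨u, ⟨hu, hu₀⟩, rfl⟩ _ ⟨w, ⟨hw, hw₀⟩, rfl⟩
      exact lt_of_tail_zeroCrossing_dotProduct_pos hu₀ hw₀ (hcross u hu w hw hu₀ hw₀))
  refine ⟨s, fun v hv => ?_⟩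
  rw [dotProduct_fin_cons]
  rcases lt_trichotomy (v 0) 0 with hneg | hzero | hpos
  · have := hsN _ (Finset.mem_image_of_mem _ (Finset.mem_filter.2 ⟨hv, hneg⟩))
    rw [lt_div_iff_of_neg hneg] at this
    linarith
  · rw [hzero, zero_mul, zero_add]
    exact h₀ v hv hzero
  · have := hsP _ (Finset.mem_image_of_mem _ (Finset.mem_filter.2 ⟨hv, hpos⟩))
    rw [div_lt_iff₀ hpos] at this
    linarith

/-- Gordan's alternative, by eliminating the first coordinate. -/
theorem exists_dotProduct_pos_of_zero_notMem_convexHull :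
    ∀ {n : ℕ} (S : Finset (Fin n → F)), (0 : Fin n → F) ∉ convexHull F (S : Set (Fin n → F)) →
      ∃ x, ∀ v ∈ S, 0 < v ⬝ᵥ x
  | 0, S, hS => ⟨0, fun v hv => (hS (Subsingleton.elim v 0 ▸ subset_convexHull F _ hv)).elim⟩
  | n + 1, S, hS => by
    classical
    let T := S.filter (· 0 = 0) ∪
      ((S.filter (0 < · 0)) ×ˢ (S.filter (· 0 < 0))).image fun p => zeroCrossing p.1 p.2
    have hT : ∀ v ∈ T, v ∈ convexHull F (S : Set _) ∧ v 0 = 0 := by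
      simp only [T, Finset.mem_union, Finset.mem_filter, Finset.mem_image, Finset.mem_product]
      rintro v (⟨hv, hv₀⟩ | ⟨⟨u, w⟩, ⟨⟨hu, hu₀⟩, hw, hw₀⟩, rfl⟩)
      · exact ⟨subset_convexHull F _ hv, hv₀⟩
      · exact ⟨segment_subset_convexHull hu hw (zeroCrossing_mem_segment hu₀ hw₀),
          zeroCrossing_apply_zero u w⟩
    obtain ⟨y, hy⟩ := exists_dotProduct_pos_of_zero_notMem_convexHull (T.image Fin.tail) (by
      rw [Finset.coe_image]
      exact zero_notMem_convexHull_image_tail hS (fun v hv => (hT v hv).1)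
        (fun v hv => (hT v hv).2))
    have hyT : ∀ v ∈ T, 0 < Fin.tail v ⬝ᵥ y := fun v hv => hy _ (Finset.mem_image_of_mem _ hv)
    obtain ⟨s, hs⟩ := exists_dotProduct_fin_cons_pos S y
      (fun v hv hv₀ => hyT v (Finset.mem_union_left _ (Finset.mem_filter.2 ⟨hv, hv₀⟩)))
      (fun u hu w hw hu₀ hw₀ => hyT _ (Finset.mem_union_right _ (Finset.mem_image_of_mem _
        (Finset.mk_mem_product (Finset.mem_filter.2 ⟨hu, hu₀⟩) (Finset.mem_filter.2 ⟨hw, hw₀⟩)))))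
    exact ⟨Fin.cons s y, hs⟩

end FourierMotzkin

section OrderedGroup

variable {G : Type*} [AddCommGroup G] [LinearOrder G] [IsOrderedAddMonoid G]

theorem exists_pos_nat_mul_eq_int {ι : Type*} (s : Finset ι) (w : ι → ℚ) :
    ∃ N : ℕ, 0 < N ∧ ∀ i ∈ s, ∃ z : ℤ, (N : ℚ) * w i = z := by
  refine ⟨∏ i ∈ s, (w i).den, Finset.prod_pos fun i _ => (w i).den_pos, fun i hi => ?_⟩
  obtain ⟨k, hk⟩ := Finset.dvd_prod_of_mem (fun i => (w i).den) hi
  refine ⟨k * (w i).num, ?_⟩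
  rw [hk, Nat.cast_mul, mul_comm ((w i).den : ℚ), mul_assoc, Rat.den_mul_eq_num]
  push_cast
  ring

/-- Clearing denominators turns a rational convex combination into a nonnegative integer one. -/
theorem zero_notMem_convexHull_image_of_pos {V : Type*} [AddCommGroup V] [Module ℚ V]
    {c : G →+ V} (hc : Function.Injective c) {s : Finset G} (hs : ∀ g ∈ s, 0 < g) :
    (0 : V) ∉ convexHull ℚ (c '' s) := by
  classical
  rw [← Finset.coe_image, Finset.mem_convexHull']
  rintro ⟨w, hw₀, hw₁, hw⟩
  rw [Finset.sum_image hc.injOn] at hw₁ hw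
  simp only [Finset.forall_mem_image] at hw₀
  obtain ⟨N, hN, hz⟩ := exists_pos_nat_mul_eq_int s fun g => w (c g)
  choose! z hz using hz
  have hz₀ : ∀ g ∈ s, 0 ≤ z g := fun g hg => by
    exact_mod_cast hz g hg ▸ mul_nonneg (Nat.cast_nonneg N) (hw₀ hg)
  obtain ⟨g₀, hg₀, hwg₀⟩ : ∃ g ∈ s, 0 < w (c g) := by
    by_contra! h
    linarith [Finset.sum_nonpos h]
  have hzg₀ : 0 < z g₀ := by
    exact_mod_cast hz g₀ hg₀ ▸ mul_pos (Nat.cast_pos.2 hN) hwg₀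
  have hsum : ∑ g ∈ s, z g • g = 0 := hc <|
    calc c (∑ g ∈ s, z g • g) = ∑ g ∈ s, ((N : ℚ) * w (c g)) • c g := by
          rw [map_sum]
          refine Finset.sum_congr rfl fun g hg => ?_
          rw [map_zsmul, ← Int.cast_smul_eq_zsmul ℚ, ← hz g hg]
      _ = c 0 := by simp_rw [mul_smul, ← Finset.smul_sum, hw, smul_zero, map_zero]
  exact (Finset.sum_pos' (fun g hg => zsmul_nonneg (hs g hg).le (hz₀ g hg))
    ⟨g₀, hg₀, zsmul_pos (hs g₀ hg₀) hzg₀⟩).ne' hsum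

theorem exists_addMonoidHom_rat_pos_of_finite [Module.Finite ℤ G] (s : Finset G)
    (hs : ∀ g ∈ s, 0 < g) : ∃ f : G →+ ℚ, ∀ g ∈ s, 0 < f g := by
  let coords : G →+ (Fin (Module.finrank ℤ G) → ℚ) :=
    ((Int.castAddHom ℚ).compLeft _).comp (Module.finBasis ℤ G).equivFun.toAddMonoidHom
  have hcoords : Function.Injective coords :=
    Int.cast_injective.comp_left.comp (Module.finBasis ℤ G).equivFun.injective
  classical
  obtain ⟨x, hx⟩ := exists_dotProduct_pos_of_zero_notMem_convexHull (s.image coords)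
    (by rw [Finset.coe_image]; exact zero_notMem_convexHull_image_of_pos hcoords hs)
  exact ⟨(AddMonoidHom.mk' (· ⬝ᵥ x) fun v w => add_dotProduct v w x).comp coords,
    fun g hg => hx _ (Finset.mem_image_of_mem _ hg)⟩

/-- `ℚ` is an injective `ℤ`-module, so a homomorphism on the subgroup generated by `s` extends. -/
theorem exists_addMonoidHom_rat_pos (s : Finset G) (hs : ∀ g ∈ s, 0 < g) :
    ∃ f : G →+ ℚ, ∀ g ∈ s, 0 < f g := by
  classical
  let H := AddSubgroup.closure (s : Set G)
  obtain ⟨f, hf⟩ := exists_addMonoidHom_rat_pos_of_finite (s.subtype (· ∈ H))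
    fun g hg => show (0 : G) < g from hs g (Finset.mem_subtype.1 hg)
  obtain ⟨F, hF⟩ := (Module.Baer.of_divisible ℚ).extension_property_addMonoidHom H.subtype
    Subtype.val_injective f
  refine ⟨F, fun g hg => ?_⟩
  have := hf ⟨g, AddSubgroup.subset_closure hg⟩ (by simpa using hg)
  rwa [← hF] at this

theorem exists_addMonoidHom_rat_strictMonoOn (s : Finset G) :
    ∃ f : G →+ ℚ, StrictMonoOn f s := by
  classical
  obtain ⟨f, hf⟩ := exists_addMonoidHom_rat_pos
    (((s ×ˢ s).filter fun p => p.1 < p.2).image fun p => p.2 - p.1) (by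
      simp only [Finset.mem_image, Finset.mem_filter]
      rintro _ ⟨_, ⟨-, hxy⟩, rfl⟩
      exact sub_pos.2 hxy)
  refine ⟨f, fun x hx y hy hxy => sub_pos.1 ?_⟩
  rw [← map_sub]
  exact hf _ (Finset.mem_image_of_mem _ (Finset.mem_filter.2 ⟨Finset.mk_mem_product hx hy, hxy⟩))

theorem exists_addMonoidHom_real_strictMonoOn (s : Finset G) {u : G} (h₀ : 0 ∈ s) (hu : u ∈ s)
    (hu₀ : 0 < u) : ∃ f : G →+ ℝ, StrictMonoOn f s ∧ f u = 1 := by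
  obtain ⟨f, hf⟩ := exists_addMonoidHom_rat_strictMonoOn s
  have hfu : (0 : ℝ) < f u := by exact_mod_cast map_zero f ▸ hf h₀ hu hu₀
  refine ⟨(f u : ℝ)⁻¹ • (Rat.castHom ℝ).toAddMonoidHom.comp f, fun x hx y hy hxy => ?_, ?_⟩
  · simp only [RingHom.toAddMonoidHom_eq_coe, AddMonoidHom.smul_apply, AddMonoidHom.coe_comp,
      AddMonoidHom.coe_coe, Rat.coe_castHom, Function.comp_apply, smul_eq_mul]
    exact mul_lt_mul_of_pos_left (by exact_mod_cast hf hx hy hxy) (inv_pos.2 hfu)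
  · simp [hfu.ne']

end OrderedGroup

/-! ### MV-chains and Chang's group -/

/-- A linearly ordered MV-algebra. The fields are the algebraic forms of the axioms (A2), (A3),
associativity and unit of `&`, (A5), (A4) and (DN) of `Ł`; (A1), (A6) and (A7) are built into
the bounded linear order. -/
class MVChain (α : Type*) extends LinearOrder α, BoundedOrder α, HImp α where
  conj : α → α → α
  conj_le_left (a b : α) : conj a b ≤ a
  conj_comm_le (a b : α) : conj a b ≤ conj b a
  conj_assoc_le (a b c : α) : conj (conj a b) c ≤ conj a (conj b c)
  le_conj_top (a : α) : a ≤ conj a ⊤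
  le_himp_iff {a b c : α} : a ≤ b ⇨ c ↔ conj a b ≤ c
  conj_himp_le (a b : α) : conj a (a ⇨ b) ≤ conj b (b ⇨ a)
  himp_bot_himp_bot_le (a : α) : (a ⇨ ⊥) ⇨ ⊥ ≤ a

namespace MVChain

infixl:70 " ⊙ " => MVChain.conj

variable {α : Type*} [MVChain α] {a b c x y z : α}

instance : Compl α := ⟨fun a => a ⇨ ⊥⟩

theorem compl_def (a : α) : aᶜ = a ⇨ ⊥ := rfl

theorem conj_comm (a b : α) : a ⊙ b = b ⊙ a :=
  le_antisymm (conj_comm_le a b) (conj_comm_le b a)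

theorem conj_top (a : α) : a ⊙ ⊤ = a :=
  le_antisymm (conj_le_left a ⊤) (le_conj_top a)

theorem top_conj (a : α) : ⊤ ⊙ a = a := by
  rw [conj_comm, conj_top]

theorem conj_assoc (a b c : α) : a ⊙ b ⊙ c = a ⊙ (b ⊙ c) := by
  refine le_antisymm (conj_assoc_le a b c) ?_
  calc a ⊙ (b ⊙ c) = b ⊙ c ⊙ a := conj_comm _ _
    _ ≤ b ⊙ (c ⊙ a) := conj_assoc_le b c a
    _ = c ⊙ a ⊙ b := conj_comm _ _
    _ ≤ c ⊙ (a ⊙ b) := conj_assoc_le c a b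
    _ = a ⊙ b ⊙ c := conj_comm _ _

theorem conj_le_conj_right (h : a ≤ b) (c : α) : a ⊙ c ≤ b ⊙ c :=
  le_himp_iff.1 (h.trans (le_himp_iff.2 le_rfl))

theorem conj_le_conj_left (h : b ≤ c) (a : α) : a ⊙ b ≤ a ⊙ c := by
  simpa only [conj_comm a] using conj_le_conj_right h a

theorem himp_conj_le (a b : α) : (a ⇨ b) ⊙ a ≤ b :=
  le_himp_iff.1 le_rfl

theorem himp_eq_top_iff : a ⇨ b = ⊤ ↔ a ≤ b := by
  rw [← top_le_iff, le_himp_iff, top_conj]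

theorem top_himp (a : α) : ⊤ ⇨ a = a :=
  le_antisymm ((conj_top _).symm.le.trans (himp_conj_le ⊤ a))
    (le_himp_iff.2 (conj_top a).le)

/-- Divisibility, the algebraic content of axiom (A4). -/
theorem conj_himp_of_le (h : b ≤ a) : a ⊙ (a ⇨ b) = b := by
  refine le_antisymm (conj_comm a _ ▸ himp_conj_le a b) ?_
  calc b = b ⊙ (b ⇨ a) := by rw [himp_eq_top_iff.2 h, conj_top]
    _ ≤ a ⊙ (a ⇨ b) := conj_himp_le b a

theorem conj_compl_self (a : α) : a ⊙ aᶜ = ⊥ :=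
  le_bot_iff.1 (conj_comm a _ ▸ himp_conj_le a ⊥)

theorem le_compl_iff_conj_eq_bot : a ≤ bᶜ ↔ a ⊙ b = ⊥ := by
  rw [compl_def, le_himp_iff, le_bot_iff]

theorem compl_compl (a : α) : aᶜᶜ = a :=
  le_antisymm (himp_bot_himp_bot_le a) (le_compl_iff_conj_eq_bot.2 (conj_compl_self a))

theorem compl_le_compl (h : a ≤ b) : bᶜ ≤ aᶜ := by
  rw [le_compl_iff_conj_eq_bot, ← le_bot_iff, ← conj_compl_self b, conj_comm _ a]
  exact conj_le_conj_right h _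

theorem compl_le_compl_iff : bᶜ ≤ aᶜ ↔ a ≤ b :=
  ⟨fun h => compl_compl a ▸ compl_compl b ▸ compl_le_compl h, compl_le_compl⟩

theorem compl_le_comm : aᶜ ≤ b ↔ bᶜ ≤ a := by
  rw [← compl_le_compl_iff, compl_compl]

theorem le_compl_comm : a ≤ bᶜ ↔ b ≤ aᶜ := by
  rw [← compl_le_compl_iff, compl_compl]

theorem compl_injective : Function.Injective (compl : α → α) :=
  fun a b h => by rw [← compl_compl a, h, compl_compl]

theorem compl_top : (⊤ : α)ᶜ = ⊥ := top_himp ⊥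

theorem compl_bot : (⊥ : α)ᶜ = ⊤ := himp_eq_top_iff.2 le_rfl

theorem compl_eq_top : aᶜ = ⊤ ↔ a = ⊥ := by
  rw [← compl_bot, compl_injective.eq_iff]

theorem compl_conj (a b : α) : (a ⊙ b)ᶜ = a ⇨ bᶜ :=
  eq_of_forall_le_iff fun c => by
    rw [le_compl_iff_conj_eq_bot, le_himp_iff, le_compl_iff_conj_eq_bot, conj_assoc]

theorem himp_eq_compl_conj (a b : α) : a ⇨ b = (a ⊙ bᶜ)ᶜ := by
  rw [compl_conj, compl_compl]

/-- Łukasiewicz's truncated sum, `min 1 (a + b)` on `[0, 1]`. -/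
def oplus (a b : α) : α := (aᶜ ⊙ bᶜ)ᶜ

theorem compl_oplus (a b : α) : (oplus a b)ᶜ = aᶜ ⊙ bᶜ := compl_compl _

theorem oplus_eq_himp (a b : α) : oplus a b = aᶜ ⇨ b := by
  rw [oplus, compl_conj, compl_compl]

theorem oplus_comm (a b : α) : oplus a b = oplus b a := by
  rw [oplus, conj_comm, oplus]

theorem oplus_assoc (a b c : α) : oplus (oplus a b) c = oplus a (oplus b c) := by
  simp only [oplus, compl_compl, conj_assoc]

theorem oplus_eq_top_iff : oplus a b = ⊤ ↔ aᶜ ≤ b := by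
  rw [oplus_eq_himp, himp_eq_top_iff]

theorem compl_lt_of_oplus_ne_top (h : oplus a b ≠ ⊤) : b < aᶜ :=
  not_le.1 (oplus_eq_top_iff.not.1 h)

theorem bot_oplus (a : α) : oplus ⊥ a = a := by
  rw [oplus_eq_himp, compl_bot, top_himp]

theorem oplus_top (a : α) : oplus a ⊤ = ⊤ :=
  oplus_eq_top_iff.2 le_top

theorem le_oplus_right (a b : α) : b ≤ oplus a b := by
  rw [oplus_eq_himp, le_himp_iff]
  exact conj_le_left b _

theorem oplus_le_oplus_left (h : b ≤ c) (a : α) : oplus a b ≤ oplus a c :=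
  compl_le_compl (conj_le_conj_left (compl_le_compl h) _)

/-- On `[0, 1]`: `a + (b - a) = b`. -/
theorem oplus_conj_compl_of_le (h : a ≤ b) : oplus a (b ⊙ aᶜ) = b := by
  rw [oplus, conj_comm b, compl_conj aᶜ b, conj_himp_of_le (compl_le_compl h), compl_compl]

theorem oplus_compl_conj_of_compl_le (h : aᶜ ≤ b) : oplus aᶜ (a ⊙ b) = b := by
  simpa only [compl_compl, conj_comm b] using oplus_conj_compl_of_le h

theorem oplus_conj_compl_of_le_compl (h : a ≤ cᶜ) : oplus a c ⊙ cᶜ = a := by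
  rw [oplus_comm, oplus_eq_himp, conj_comm, conj_himp_of_le h]

theorem eq_of_oplus_eq_oplus (ha : a ≤ cᶜ) (hb : b ≤ cᶜ) (h : oplus a c = oplus b c) : a = b := by
  rw [← oplus_conj_compl_of_le_compl ha, h, oplus_conj_compl_of_le_compl hb]

theorem compl_conj_eq_oplus (a b : α) : (a ⊙ b)ᶜ = oplus aᶜ bᶜ := by
  rw [oplus, compl_compl, compl_compl]

theorem le_oplus_left (a b : α) : a ≤ oplus a b :=
  oplus_comm b a ▸ le_oplus_right b a

theorem conj_oplus_eq_oplus_conj (hx : xᶜ ≤ y) (hz : zᶜ ≤ y) :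
    oplus (x ⊙ y) z = oplus x (y ⊙ z) := by
  have key : (x ⊙ y)ᶜ ⊙ zᶜ = xᶜ ⊙ (y ⊙ z)ᶜ :=
    calc (x ⊙ y)ᶜ ⊙ zᶜ = (y ⇨ xᶜ) ⊙ (y ⊙ (y ⇨ zᶜ)) := by
          rw [conj_comm x, compl_conj, conj_himp_of_le hz]
      _ = xᶜ ⊙ (y ⊙ z)ᶜ := by
          rw [← conj_assoc, conj_comm _ y, conj_himp_of_le hx, compl_conj]
  rw [oplus, key, oplus]

theorem conj_oplus_eq_conj_oplus (hx : xᶜ ≤ y) (hz : z ≤ yᶜ) :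
    oplus (x ⊙ y) z = x ⊙ oplus y z := by
  have hy : yᶜ ≤ x := compl_le_comm.1 hx
  refine eq_of_oplus_eq_oplus (c := xᶜ) ?_ ((compl_compl x).symm ▸ conj_le_left x _) ?_
  · calc oplus (x ⊙ y) z ≤ oplus (x ⊙ y) yᶜ := oplus_le_oplus_left hz _
      _ = xᶜᶜ := by rw [oplus_comm, conj_comm x, oplus_compl_conj_of_compl_le hy, compl_compl]
  · calc oplus (oplus (x ⊙ y) z) xᶜ = oplus (oplus xᶜ (x ⊙ y)) z := by
          rw [oplus_comm, ← oplus_assoc]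
      _ = oplus xᶜ (x ⊙ oplus y z) := by
          rw [oplus_compl_conj_of_compl_le hx,
            oplus_compl_conj_of_compl_le (hx.trans (le_oplus_left y z))]
      _ = oplus (x ⊙ oplus y z) xᶜ := oplus_comm _ _

theorem oplus_conj_eq_conj_oplus (hx : x ≤ yᶜ) (hz : z ≤ yᶜ) :
    oplus x y ⊙ z = x ⊙ oplus y z := by
  apply compl_injective
  rw [compl_conj_eq_oplus, compl_oplus, compl_conj_eq_oplus, compl_oplus]
  exact conj_oplus_eq_oplus_conj (by rwa [compl_compl]) (by rwa [compl_compl])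

theorem oplus_conj_eq_oplus_conj (hx : x ≤ yᶜ) (hz : yᶜ ≤ z) :
    oplus x y ⊙ z = oplus x (y ⊙ z) := by
  apply compl_injective
  rw [compl_conj_eq_oplus, compl_oplus, compl_oplus, compl_conj_eq_oplus]
  exact conj_oplus_eq_conj_oplus (by rwa [compl_compl])
    (by rwa [compl_compl, ← compl_le_comm])

/-- Chang's enveloping group of an MV-chain `α`, whose elements `int + frac` have fractional
part `frac` in `α \ {⊤}`. -/
@[ext]
structure ChangGroup (α : Type*) [MVChain α] where
  int : ℤ
  frac : α
  frac_ne_top : frac ≠ ⊤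

namespace ChangGroup

instance : Add (ChangGroup α) where
  add p q :=
    if h : oplus p.frac q.frac = ⊤ then
      ⟨p.int + q.int + 1, p.frac ⊙ q.frac, ne_top_of_le_ne_top p.frac_ne_top (conj_le_left _ _)⟩
    else ⟨p.int + q.int, oplus p.frac q.frac, h⟩

theorem mk_add_mk_of_oplus_eq_top {k m : ℤ} {a b : α} {ha hb} (h : oplus a b = ⊤) :
    (⟨k, a, ha⟩ + ⟨m, b, hb⟩ : ChangGroup α) =
      ⟨k + m + 1, a ⊙ b, ne_top_of_le_ne_top ha (conj_le_left _ _)⟩ :=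
  dif_pos h

theorem mk_add_mk_of_oplus_ne_top {k m : ℤ} {a b : α} {ha hb} (h : oplus a b ≠ ⊤) :
    (⟨k, a, ha⟩ + ⟨m, b, hb⟩ : ChangGroup α) = ⟨k + m, oplus a b, h⟩ :=
  dif_neg h

theorem mk_eq_mk {k m : ℤ} {a b : α} {ha hb} (hkm : k = m) (hab : a = b) :
    (⟨k, a, ha⟩ : ChangGroup α) = ⟨m, b, hb⟩ := by
  subst hkm hab
  rfl

theorem int_le_int_add (p q : ChangGroup α) : p.int + q.int ≤ (p + q).int := by
  change _ ≤ (dite _ _ _ : ChangGroup α).int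
  split <;> simp

protected theorem add_comm (p q : ChangGroup α) : p + q = q + p := by
  obtain ⟨k, a, ha⟩ := p
  obtain ⟨m, b, hb⟩ := q
  by_cases h : oplus a b = ⊤
  · rw [mk_add_mk_of_oplus_eq_top h, mk_add_mk_of_oplus_eq_top (oplus_comm a b ▸ h)]
    exact mk_eq_mk (by ring) (conj_comm a b)
  · rw [mk_add_mk_of_oplus_ne_top h, mk_add_mk_of_oplus_ne_top (oplus_comm a b ▸ h)]
    exact mk_eq_mk (by ring) (oplus_comm a b)

protected theorem add_assoc (p q r : ChangGroup α) : p + q + r = p + (q + r) := by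
  obtain ⟨k, x, hx⟩ := p
  obtain ⟨m, y, hy⟩ := q
  obtain ⟨n, z, hz⟩ := r
  by_cases hxy : oplus x y = ⊤ <;> by_cases hyz : oplus y z = ⊤
  · rw [mk_add_mk_of_oplus_eq_top hxy, mk_add_mk_of_oplus_eq_top hyz]
    have e := conj_oplus_eq_oplus_conj (oplus_eq_top_iff.1 hxy)
      (compl_le_comm.1 (oplus_eq_top_iff.1 hyz))
    by_cases h : oplus (x ⊙ y) z = ⊤
    · rw [mk_add_mk_of_oplus_eq_top h, mk_add_mk_of_oplus_eq_top (e ▸ h)]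
      exact mk_eq_mk (by ring) (conj_assoc x y z)
    · rw [mk_add_mk_of_oplus_ne_top h, mk_add_mk_of_oplus_ne_top (e ▸ h)]
      exact mk_eq_mk (by ring) e
  · rw [mk_add_mk_of_oplus_eq_top hxy, mk_add_mk_of_oplus_ne_top hyz]
    have e := conj_oplus_eq_conj_oplus (oplus_eq_top_iff.1 hxy)
      (compl_lt_of_oplus_ne_top hyz).le
    rw [mk_add_mk_of_oplus_ne_top (e ▸ ne_top_of_le_ne_top hx (conj_le_left x _)),
      mk_add_mk_of_oplus_eq_top (by rw [← oplus_assoc, hxy, oplus_comm, oplus_top])]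
    exact mk_eq_mk (by ring) e
  · rw [mk_add_mk_of_oplus_ne_top hxy, mk_add_mk_of_oplus_eq_top hyz]
    have e := oplus_conj_eq_oplus_conj
      (le_compl_comm.2 (compl_lt_of_oplus_ne_top hxy).le) (oplus_eq_top_iff.1 hyz)
    rw [mk_add_mk_of_oplus_eq_top (by rw [oplus_assoc, hyz, oplus_top]),
      mk_add_mk_of_oplus_ne_top (e ▸ ne_top_of_le_ne_top hxy (conj_le_left _ z))]
    exact mk_eq_mk (by ring) e
  · rw [mk_add_mk_of_oplus_ne_top hxy, mk_add_mk_of_oplus_ne_top hyz]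
    by_cases h : oplus (oplus x y) z = ⊤
    · rw [mk_add_mk_of_oplus_eq_top h, mk_add_mk_of_oplus_eq_top (oplus_assoc x y z ▸ h)]
      exact mk_eq_mk (by ring) (oplus_conj_eq_conj_oplus
        (le_compl_comm.2 (compl_lt_of_oplus_ne_top hxy).le) (compl_lt_of_oplus_ne_top hyz).le)
    · rw [mk_add_mk_of_oplus_ne_top h, mk_add_mk_of_oplus_ne_top (oplus_assoc x y z ▸ h)]
      exact mk_eq_mk (by ring) (oplus_assoc x y z)

variable [Nontrivial α]

instance : Zero (ChangGroup α) := ⟨⟨0, ⊥, bot_ne_top⟩⟩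

instance : Neg (ChangGroup α) where
  neg p :=
    if h : p.frac = ⊥ then ⟨-p.int, ⊥, bot_ne_top⟩
    else ⟨-p.int - 1, p.fracᶜ, compl_eq_top.not.2 h⟩

theorem zero_def : (0 : ChangGroup α) = ⟨0, ⊥, bot_ne_top⟩ := rfl

theorem neg_mk_of_eq_bot {k : ℤ} {a : α} {ha} (h : a = ⊥) :
    -(⟨k, a, ha⟩ : ChangGroup α) = ⟨-k, ⊥, bot_ne_top⟩ :=
  dif_pos h

theorem neg_mk_of_ne_bot {k : ℤ} {a : α} {ha} (h : a ≠ ⊥) :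
    -(⟨k, a, ha⟩ : ChangGroup α) = ⟨-k - 1, aᶜ, compl_eq_top.not.2 h⟩ :=
  dif_neg h

protected theorem zero_add (p : ChangGroup α) : 0 + p = p := by
  obtain ⟨k, a, ha⟩ := p
  rw [zero_def, mk_add_mk_of_oplus_ne_top (by rwa [bot_oplus])]
  exact mk_eq_mk (zero_add k) (bot_oplus a)

protected theorem neg_add_cancel (p : ChangGroup α) : -p + p = 0 := by
  obtain ⟨k, a, ha⟩ := p
  by_cases h : a = ⊥
  · subst h
    rw [neg_mk_of_eq_bot rfl, mk_add_mk_of_oplus_ne_top (by rw [bot_oplus]; exact bot_ne_top)]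
    exact mk_eq_mk (neg_add_cancel k) (bot_oplus ⊥)
  · rw [neg_mk_of_ne_bot h, mk_add_mk_of_oplus_eq_top (oplus_eq_top_iff.2 (compl_compl a).le)]
    exact mk_eq_mk (by ring) ((conj_comm _ _).trans (conj_compl_self a))

instance : AddCommGroup (ChangGroup α) where
  add_assoc := ChangGroup.add_assoc
  zero_add := ChangGroup.zero_add
  add_zero p := ChangGroup.add_comm p 0 ▸ ChangGroup.zero_add p
  add_comm := ChangGroup.add_comm
  neg_add_cancel := ChangGroup.neg_add_cancel
  nsmul := nsmulRec
  zsmul := zsmulRec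

theorem int_neg_of_frac_eq_bot (p : ChangGroup α) (h : p.frac = ⊥) : (-p).int = -p.int := by
  obtain ⟨k, a, ha⟩ := p
  rw [neg_mk_of_eq_bot h]

theorem int_neg_of_frac_ne_bot (p : ChangGroup α) (h : p.frac ≠ ⊥) : (-p).int = -p.int - 1 := by
  obtain ⟨k, a, ha⟩ := p
  rw [neg_mk_of_ne_bot h]

def nonnegCone : AddGroupCone (ChangGroup α) where
  carrier := {p | 0 ≤ p.int}
  add_mem' {p q} hp hq := show 0 ≤ (p + q).int from (add_nonneg hp hq).trans (int_le_int_add p q)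
  zero_mem' := show (0 : ℤ) ≤ 0 from le_rfl
  eq_zero_of_mem_of_neg_mem' {p} hp hn := by
    change 0 ≤ p.int at hp
    change 0 ≤ (-p).int at hn
    by_cases h : p.frac = ⊥
    · rw [int_neg_of_frac_eq_bot p h] at hn
      exact ChangGroup.ext (show p.int = 0 by omega) h
    · rw [int_neg_of_frac_ne_bot p h] at hn
      omega

theorem mem_nonnegCone {p : ChangGroup α} : p ∈ nonnegCone ↔ 0 ≤ p.int := Iff.rfl

instance : DecidablePred (· ∈ (nonnegCone : AddGroupCone (ChangGroup α))) :=
  fun _ => decidable_of_iff _ mem_nonnegCone.symm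

instance : HasMemOrNegMem (nonnegCone : AddGroupCone (ChangGroup α)) where
  mem_or_neg_mem p := by
    rw [mem_nonnegCone, mem_nonnegCone]
    by_cases h : p.frac = ⊥
    · rw [int_neg_of_frac_eq_bot p h]; omega
    · rw [int_neg_of_frac_ne_bot p h]; omega

instance : LinearOrder (ChangGroup α) := LinearOrder.mkOfAddGroupCone nonnegCone

instance : IsOrderedAddMonoid (ChangGroup α) := IsOrderedAddMonoid.mkOfCone nonnegCone

theorem nonneg_iff {p : ChangGroup α} : 0 ≤ p ↔ 0 ≤ p.int := by
  change p - 0 ∈ nonnegCone ↔ _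
  rw [sub_zero, mem_nonnegCone]

def embed (a : α) : ChangGroup α :=
  if h : a = ⊤ then ⟨1, ⊥, bot_ne_top⟩ else ⟨0, a, h⟩

theorem embed_of_ne_top (h : a ≠ ⊤) : embed a = ⟨0, a, h⟩ := dif_neg h

theorem embed_top : embed (⊤ : α) = ⟨1, ⊥, bot_ne_top⟩ := dif_pos rfl

theorem embed_bot : embed (⊥ : α) = 0 := embed_of_ne_top bot_ne_top

theorem embed_nonneg (a : α) : 0 ≤ embed a := by
  rw [nonneg_iff, embed]
  split <;> simp

theorem embed_injective : Function.Injective (embed : α → ChangGroup α) := by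
  intro a b h
  by_cases ha : a = ⊤ <;> by_cases hb : b = ⊤
  · rw [ha, hb]
  · rw [ha, embed_top, embed_of_ne_top hb] at h
    simpa using congrArg int h
  · rw [hb, embed_top, embed_of_ne_top ha] at h
    simpa using congrArg int h
  · rw [embed_of_ne_top ha, embed_of_ne_top hb] at h
    exact congrArg frac h

theorem embed_add_embed_conj_compl (h : a ≤ b) : embed a + embed (b ⊙ aᶜ) = embed b := by
  by_cases ha : a = ⊤
  · subst ha
    obtain rfl := top_le_iff.1 h
    rw [compl_top, top_conj, embed_bot, add_zero]
  by_cases hb : b = ⊤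
  · subst hb
    rw [top_conj]
    by_cases ha₀ : a = ⊥
    · rw [ha₀, compl_bot, embed_bot, zero_add]
    · rw [embed_of_ne_top ha, embed_of_ne_top (compl_eq_top.not.2 ha₀),
        mk_add_mk_of_oplus_eq_top (oplus_eq_top_iff.2 le_rfl), embed_top]
      exact ChangGroup.ext rfl (conj_compl_self a)
  · have hab := oplus_conj_compl_of_le h
    rw [embed_of_ne_top ha, embed_of_ne_top hb,
      embed_of_ne_top (ne_top_of_le_ne_top hb (conj_le_left _ _)),
      mk_add_mk_of_oplus_ne_top (by rw [hab]; exact hb)]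
    exact ChangGroup.ext rfl hab

theorem embed_strictMono : StrictMono (embed : α → ChangGroup α) :=
  Monotone.strictMono_of_injective (fun a b h => by
    rw [← embed_add_embed_conj_compl h]
    exact le_add_of_nonneg_right (embed_nonneg _)) embed_injective

theorem embed_compl (a : α) : embed aᶜ = embed ⊤ - embed a := by
  have := embed_add_embed_conj_compl (le_top : a ≤ ⊤)
  rw [top_conj] at this
  exact eq_sub_of_add_eq' this

theorem embed_himp_of_le (h : b ≤ a) : embed (a ⇨ b) = embed ⊤ - embed a + embed b := by
  rw [himp_eq_compl_conj, embed_compl, ← embed_add_embed_conj_compl h]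
  abel

theorem embed_conj_of_compl_le (h : bᶜ ≤ a) : embed (a ⊙ b) = embed a + embed b - embed ⊤ := by
  have := embed_add_embed_conj_compl h
  rw [compl_compl, embed_compl] at this
  rw [← this]
  abel

end ChangGroup

open ChangGroup

theorem exists_partial_embedding [Nontrivial α] (s : Finset α) :
    ∃ v : α → ℝ, StrictMonoOn v (insert ⊥ (insert ⊤ ↑s)) ∧ v ⊥ = 0 ∧ v ⊤ = 1 ∧
      ∀ a ∈ s, ∀ b ∈ s, v (a ⇨ b) = min 1 (1 - v a + v b) ∧ v (a ⊙ b) = max 0 (v a + v b - 1) := by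
  classical
  let t : Finset α := insert ⊥ (insert ⊤ (s ∪ s.image compl))
  obtain ⟨f, hf, hf1⟩ := exists_addMonoidHom_real_strictMonoOn (t.image embed)
    (embed_bot (α := α) ▸ Finset.mem_image_of_mem _ (by simp [t]))
    (Finset.mem_image_of_mem _ (by simp [t])) (embed_bot (α := α) ▸ embed_strictMono bot_lt_top)
  have hv : StrictMonoOn (f ∘ embed) t := fun a ha b hb hab =>
    hf (Finset.mem_image_of_mem _ ha) (Finset.mem_image_of_mem _ hb) (embed_strictMono hab)
  have hmem : ∀ a ∈ s, a ∈ t ∧ aᶜ ∈ t := fun a ha => by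
    simp only [t, Finset.mem_insert, Finset.mem_union, Finset.mem_image]
    exact ⟨.inr (.inr (.inl ha)), .inr (.inr (.inr ⟨a, ha, rfl⟩))⟩
  have hst : insert ⊥ (insert ⊤ (s : Set α)) ⊆ t := by
    intro a
    simp only [t, Set.mem_insert_iff, Finset.coe_insert, Finset.coe_union, Set.mem_union]
    tauto
  refine ⟨f ∘ embed, hv.mono hst, by rw [Function.comp_apply, embed_bot, map_zero], hf1,
    fun a ha b hb => ⟨?_, ?_⟩⟩
  · rcases le_or_gt a b with hab | hba
    · have := hv.monotoneOn (hmem a ha).1 (hmem b hb).1 hab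
      simp only [Function.comp_apply] at this ⊢
      rw [himp_eq_top_iff.2 hab, hf1, min_eq_left (by linarith)]
    · have := hv (hmem b hb).1 (hmem a ha).1 hba
      simp only [Function.comp_apply] at this ⊢
      rw [embed_himp_of_le hba.le, map_add, map_sub, hf1, min_eq_right (by linarith)]
  · have hc : f (embed bᶜ) = 1 - f (embed b) := by rw [embed_compl, map_sub, hf1]
    rcases le_or_gt a bᶜ with hab | hba
    · have := hv.monotoneOn (hmem a ha).1 (hmem b hb).2 hab
      simp only [Function.comp_apply] at this ⊢
      rw [le_compl_iff_conj_eq_bot.1 hab, embed_bot, map_zero, max_eq_left (by linarith)]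
    · have := hv (hmem b hb).2 (hmem a ha).1 hba
      simp only [Function.comp_apply] at this ⊢
      rw [embed_conj_of_compl_le hba.le, map_sub, map_add, hf1, max_eq_right (by linarith)]

end MVChain

/-! ### The Hilbert calculus -/

open LFormula

local infixr:55 " ⇒ " => LFormula.impl
local infixl:60 " & " => LFormula.conj

/-- Łukasiewicz disjunction, `max` on `[0, 1]`. -/
def LFormula.or (A B : LFormula) : LFormula := (A ⇒ B) ⇒ B

def LFormula.pow (A : LFormula) : ℕ → LFormula
  | 0 => bot.neg
  | n + 1 => A & A.pow n

namespace LProof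

variable {Γ Δ : Set LFormula} {A B C D : LFormula}

theorem trans (h₁ : LProof Γ (A ⇒ B)) (h₂ : LProof Γ (B ⇒ C)) : LProof Γ (A ⇒ C) :=
  ((a1 A B C).mp h₁).mp h₂

theorem imp_intro (A B : LFormula) : LProof Γ (A ⇒ B ⇒ A) :=
  (a5b A B A).mp (a2 A B)

theorem top : LProof Γ bot.neg := a7 bot

theorem imp_refl (A : LFormula) : LProof Γ (A ⇒ A) :=
  (((a5b _ A A).mp ((a3 _ A).trans (a2 A bot.neg))).mp top)

theorem imp_swap (A B C : LFormula) : LProof Γ ((A ⇒ B ⇒ C) ⇒ B ⇒ A ⇒ C) :=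
  ((a5a A B C).trans ((a1 _ _ C).mp (a3 B A))).trans (a5b B A C)

theorem swap (h : LProof Γ (A ⇒ B ⇒ C)) : LProof Γ (B ⇒ A ⇒ C) :=
  (imp_swap A B C).mp h

theorem imp_anti_left (h : LProof Γ (A ⇒ B)) : LProof Γ ((B ⇒ C) ⇒ A ⇒ C) :=
  (a1 A B C).mp h

theorem imp_mono_right (h : LProof Γ (B ⇒ C)) : LProof Γ ((A ⇒ B) ⇒ A ⇒ C) :=
  (swap (a1 A B C)).mp h

theorem mp_imp (A B : LFormula) : LProof Γ (A ⇒ (A ⇒ B) ⇒ B) :=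
  swap (imp_refl (A ⇒ B))

theorem imp_top (A : LFormula) : LProof Γ (A ⇒ bot.neg) :=
  (imp_intro _ A).mp top

theorem top_imp (A : LFormula) : LProof Γ ((bot.neg ⇒ A) ⇒ A) :=
  (mp_imp _ A).mp top

theorem imp_neg_neg (A : LFormula) : LProof Γ (A ⇒ A.neg.neg) :=
  mp_imp A bot

theorem contrapose (A B : LFormula) : LProof Γ ((A ⇒ B) ⇒ B.neg ⇒ A.neg) :=
  a1 A B bot

theorem of_contrapose (A B : LFormula) : LProof Γ ((A.neg ⇒ B.neg) ⇒ B ⇒ A) :=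
  (contrapose A.neg B.neg).trans
    ((imp_anti_left (imp_neg_neg B)).trans (imp_mono_right (dn A)))

theorem conj_intro (A B : LFormula) : LProof Γ (A ⇒ B ⇒ A & B) :=
  (a5b A B _).mp (imp_refl _)

theorem conj_top_intro (A : LFormula) : LProof Γ (A ⇒ A & bot.neg) :=
  (swap (conj_intro A _)).mp top

theorem conj_mono_left (A B C : LFormula) : LProof Γ ((A ⇒ B) ⇒ A & C ⇒ B & C) :=
  (imp_mono_right (conj_intro B C)).trans (a5a A C _)

theorem conj_mono_right (A B C : LFormula) : LProof Γ ((A ⇒ B) ⇒ C & A ⇒ C & B) :=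
  (conj_mono_left A B C).trans
    ((imp_anti_left (a3 C A)).trans (imp_mono_right (a3 B C)))

theorem conj_mono (h₁ : LProof Γ (A ⇒ B)) (h₂ : LProof Γ (C ⇒ D)) : LProof Γ (A & C ⇒ B & D) :=
  ((conj_mono_left A B C).mp h₁).trans ((conj_mono_right C D B).mp h₂)

theorem conj_assoc (A B C : LFormula) : LProof Γ (A & B & C ⇒ A & (B & C)) := by
  have h : LProof Γ (A ⇒ B ⇒ C ⇒ A & (B & C)) :=
    swap (((conj_intro B C).trans (imp_mono_right (swap (conj_intro A _)))).trans
      (imp_swap C A _))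
  exact (a5a _ C _).mp ((a5a A B _).mp h)

theorem conj_assoc' (A B C : LFormula) : LProof Γ (A & (B & C) ⇒ A & B & C) :=
  (a3 _ _).trans ((conj_assoc B C A).trans ((a3 _ _).trans ((conj_assoc C A B).trans (a3 _ _))))

theorem cases (h₁ : LProof Γ ((A ⇒ B) ⇒ C)) (h₂ : LProof Γ ((B ⇒ A) ⇒ C)) : LProof Γ C :=
  ((a6 A B C).mp h₁).mp h₂

/-- Wajsberg's axiom, obtained by contraposing (A4) twice. -/
theorem wajsberg (A B : LFormula) : LProof Γ (((A ⇒ B) ⇒ B) ⇒ (B ⇒ A) ⇒ A) := by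
  have a4_neg (X Y : LFormula) : LProof Γ (((Y ⇒ X) ⇒ Y.neg) ⇒ (X ⇒ Y) ⇒ X.neg) :=
    (a5a _ Y bot).trans (((contrapose _ _).mp (a3 Y _)).trans (((contrapose _ _).mp (a4 X Y)).trans
      (((contrapose _ _).mp (a3 _ X)).trans (a5b _ X bot))))
  exact (imp_anti_left (of_contrapose B A)).trans ((imp_mono_right (imp_neg_neg B)).trans
    ((a4_neg A.neg B.neg).trans ((imp_mono_right (dn A)).trans (imp_anti_left (contrapose B A)))))

theorem or_intro_left (A B : LFormula) : LProof Γ (A ⇒ A.or B) := mp_imp A B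

theorem or_intro_right (A B : LFormula) : LProof Γ (B ⇒ A.or B) := imp_intro B _

theorem or_elim (h₁ : LProof Γ (A ⇒ C)) (h₂ : LProof Γ (B ⇒ C)) : LProof Γ (A.or B ⇒ C) :=
  cases (A := A) (B := B) ((mp_imp (A ⇒ B) B).trans (imp_mono_right h₂))
    ((swap (wajsberg A B)).trans (imp_mono_right h₁))

theorem or_mono (h₁ : LProof Γ (A ⇒ C)) (h₂ : LProof Γ (B ⇒ D)) : LProof Γ (A.or B ⇒ C.or D) :=
  or_elim (h₁.trans (or_intro_left C D)) (h₂.trans (or_intro_right C D))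

theorem prelinear (A B : LFormula) : LProof Γ ((A ⇒ B).or (B ⇒ A)) :=
  cases (mp_imp (A ⇒ B) (B ⇒ A)) (imp_intro (B ⇒ A) _)

theorem conj_or_distrib (A B C : LFormula) : LProof Γ (C & A.or B ⇒ (C & A).or (C & B)) :=
  cases (A := A) (B := B)
    (((mp_imp (A ⇒ B) B).trans (conj_mono_right _ B C)).trans (imp_mono_right (or_intro_right _ _)))
    (((swap (wajsberg A B)).trans (conj_mono_right _ A C)).trans
      (imp_mono_right (or_intro_left _ _)))

theorem conj_imp_or_conj_self (A B : LFormula) : LProof Γ (A & B ⇒ (A & A).or (B & B)) :=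
  cases (A := A) (B := B) ((conj_mono_left A B B).trans (imp_mono_right (or_intro_right _ _)))
    ((conj_mono_right B A A).trans (imp_mono_right (or_intro_left _ _)))

theorem or_conj_or (A B : LFormula) : LProof Γ (A.or B & A.or B ⇒ (A & A).or (B & B)) :=
  (conj_or_distrib A B _).trans (or_elim
    ((a3 _ A).trans ((conj_or_distrib A B A).trans
      (or_elim (or_intro_left _ _) (conj_imp_or_conj_self A B))))
    ((a3 _ B).trans ((conj_or_distrib A B B).trans
      (or_elim ((a3 B A).trans (conj_imp_or_conj_self A B)) (or_intro_right _ _)))))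

theorem conj_self (h : LProof Γ A) : LProof Γ (A & A) :=
  ((conj_intro A A).mp h).mp h

theorem pow_add (A : LFormula) (m n : ℕ) : LProof Γ (A.pow m & A.pow n ⇒ A.pow (m + n)) := by
  induction m with
  | zero => simpa [LFormula.pow] using (a3 _ (A.pow n)).trans (a2 (A.pow n) bot.neg)
  | succ m ih =>
    rw [Nat.succ_add]
    exact (conj_assoc _ _ _).trans ((conj_mono_right _ _ A).mp ih)

theorem pow_split (A : LFormula) (m n : ℕ) : LProof Γ (A.pow (m + n) ⇒ A.pow m & A.pow n) := by
  induction m with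
  | zero => simpa [LFormula.pow] using (conj_intro bot.neg (A.pow n)).mp top
  | succ m ih =>
    rw [Nat.succ_add]
    exact ((conj_mono_right _ _ A).mp ih).trans (conj_assoc' _ _ _)

theorem pow_anti (A : LFormula) {m n : ℕ} (h : n ≤ m) : LProof Γ (A.pow m ⇒ A.pow n) := by
  obtain ⟨k, rfl⟩ := Nat.exists_eq_add_of_le h
  exact (pow_split A n k).trans (a2 _ _)

theorem or_pow_two_pow (h : LProof Γ (A.or B)) (j : ℕ) :
    LProof Γ ((A.pow (2 ^ j)).or (B.pow (2 ^ j))) := by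
  induction j with
  | zero => exact (or_mono (conj_top_intro A) (conj_top_intro B)).mp h
  | succ j ih =>
    rw [pow_succ, mul_two]
    exact (or_mono (pow_add A _ _) (pow_add B _ _)).mp ((or_conj_or _ _).mp (conj_self ih))

theorem mono (h : LProof Γ A) (hΓ : Γ ⊆ Δ) : LProof Δ A := by
  induction h with
  | prem h => exact prem (hΓ h)
  | a1 => exact a1 _ _ _
  | a2 => exact a2 _ _
  | a3 => exact a3 _ _
  | a4 => exact a4 _ _
  | a5a => exact a5a _ _ _
  | a5b => exact a5b _ _ _
  | a6 => exact a6 _ _ _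
  | a7 => exact a7 _
  | dn => exact dn _
  | mp _ _ ih₁ ih₂ => exact ih₁.mp ih₂

theorem exists_finite_subset (h : LProof Γ A) : ∃ s ⊆ Γ, s.Finite ∧ LProof s A := by
  induction h with
  | @prem φ h => exact ⟨{φ}, Set.singleton_subset_iff.2 h, Set.finite_singleton φ, prem rfl⟩
  | a1 => exact ⟨∅, Set.empty_subset _, Set.finite_empty, a1 _ _ _⟩
  | a2 => exact ⟨∅, Set.empty_subset _, Set.finite_empty, a2 _ _⟩
  | a3 => exact ⟨∅, Set.empty_subset _, Set.finite_empty, a3 _ _⟩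
  | a4 => exact ⟨∅, Set.empty_subset _, Set.finite_empty, a4 _ _⟩
  | a5a => exact ⟨∅, Set.empty_subset _, Set.finite_empty, a5a _ _ _⟩
  | a5b => exact ⟨∅, Set.empty_subset _, Set.finite_empty, a5b _ _ _⟩
  | a6 => exact ⟨∅, Set.empty_subset _, Set.finite_empty, a6 _ _ _⟩
  | a7 => exact ⟨∅, Set.empty_subset _, Set.finite_empty, a7 _⟩
  | dn => exact ⟨∅, Set.empty_subset _, Set.finite_empty, dn _⟩
  | mp _ _ ih₁ ih₂ =>
    obtain ⟨s₁, hs₁, hf₁, h₁⟩ := ih₁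
    obtain ⟨s₂, hs₂, hf₂, h₂⟩ := ih₂
    exact ⟨s₁ ∪ s₂, Set.union_subset hs₁ hs₂, hf₁.union hf₂,
      (h₁.mono Set.subset_union_left).mp (h₂.mono Set.subset_union_right)⟩

theorem deduction (h : LProof (insert A Γ) B) : ∃ n, LProof Γ (A.pow n ⇒ B) := by
  induction h with
  | @prem φ h =>
    rcases h with rfl | h
    · exact ⟨1, a2 _ _⟩
    · exact ⟨0, (imp_intro φ _).mp (prem h)⟩
  | a1 => exact ⟨0, (imp_intro _ _).mp (a1 _ _ _)⟩
  | a2 => exact ⟨0, (imp_intro _ _).mp (a2 _ _)⟩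
  | a3 => exact ⟨0, (imp_intro _ _).mp (a3 _ _)⟩
  | a4 => exact ⟨0, (imp_intro _ _).mp (a4 _ _)⟩
  | a5a => exact ⟨0, (imp_intro _ _).mp (a5a _ _ _)⟩
  | a5b => exact ⟨0, (imp_intro _ _).mp (a5b _ _ _)⟩
  | a6 => exact ⟨0, (imp_intro _ _).mp (a6 _ _ _)⟩
  | a7 => exact ⟨0, (imp_intro _ _).mp (a7 _)⟩
  | dn => exact ⟨0, (imp_intro _ _).mp (dn _)⟩
  | @mp φ ψ _ _ ih₁ ih₂ =>
    obtain ⟨n, hn⟩ := ih₁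
    obtain ⟨m, hm⟩ := ih₂
    exact ⟨n + m, (pow_split A n m).trans
      (((conj_mono_right _ _ _).mp hm).trans ((a5a _ φ ψ).mp hn))⟩

end LProof

open LProof

/-! ### The Lindenbaum algebra -/

/-- A theory whose Lindenbaum algebra is a nontrivial chain. -/
structure IsLinearTheory (Φ : Set LFormula) : Prop where
  prelinear (A B : LFormula) : LProof Φ (A ⇒ B) ∨ LProof Φ (B ⇒ A)
  consistent : ¬ LProof Φ bot

/-- Lindenbaum's lemma: a maximal theory not proving `φ` is linear. -/
theorem exists_isLinearTheory_not_proves {φ : LFormula} (h : ¬ LProof ∅ φ) :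
    ∃ Φ, IsLinearTheory Φ ∧ ¬ LProof Φ φ := by
  obtain ⟨Φ, -, hΦ⟩ := zorn_subset_nonempty {Γ | ¬ LProof Γ φ} (fun c hc hchain hne =>
    ⟨⋃₀ c, fun hproof => by
      obtain ⟨s, hs, hsfin, hps⟩ := exists_finite_subset hproof
      obtain ⟨t, htc, hst⟩ :=
        hchain.directedOn.exists_mem_subset_of_finite_of_subset_sUnion hne hsfin hs
      exact hc htc (hps.mono hst), fun _ => Set.subset_sUnion_of_mem⟩) ∅ h
  have hinsert : ∀ ψ ∉ Φ, LProof (insert ψ Φ) φ := fun ψ hψ => by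
    by_contra hc
    exact hψ (hΦ.2 hc (Set.subset_insert ψ Φ) (Set.mem_insert ψ Φ))
  refine ⟨Φ, ⟨fun A B => ?_, fun hbot => hΦ.prop ((a7 φ).mp hbot)⟩, hΦ.prop⟩
  by_contra! hAB
  obtain ⟨n, hn⟩ := deduction (hinsert _ fun hm => hAB.1 (prem hm))
  obtain ⟨m, hm⟩ := deduction (hinsert _ fun hm => hAB.2 (prem hm))
  have hn' : n ≤ 2 ^ (n + m) := (Nat.le_add_right n m).trans Nat.lt_two_pow_self.le
  have hm' : m ≤ 2 ^ (n + m) := (Nat.le_add_left m n).trans Nat.lt_two_pow_self.le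
  exact hΦ.prop ((or_elim ((pow_anti _ hn').trans hn) ((pow_anti _ hm').trans hm)).mp
    (or_pow_two_pow (prelinear A B) (n + m)))

def Lindenbaum.setoid (Φ : Set LFormula) : Setoid LFormula where
  r A B := LProof Φ (A ⇒ B) ∧ LProof Φ (B ⇒ A)
  iseqv := ⟨fun A => ⟨imp_refl A, imp_refl A⟩, And.symm,
    fun h₁ h₂ => ⟨h₁.1.trans h₂.1, h₂.2.trans h₁.2⟩⟩

def Lindenbaum (Φ : Set LFormula) : Type := Quotient (Lindenbaum.setoid Φ)

namespace Lindenbaum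

variable {Φ : Set LFormula}

def mk (Φ : Set LFormula) (A : LFormula) : Lindenbaum Φ := Quotient.mk _ A

noncomputable instance [Fact (IsLinearTheory Φ)] : MVChain (Lindenbaum Φ) where
  le := Quotient.lift₂ (fun A B => LProof Φ (A ⇒ B)) fun _ _ _ _ hA hB =>
    propext ⟨fun h => (hA.2.trans h).trans hB.1, fun h => (hA.1.trans h).trans hB.2⟩
  le_refl := Quotient.ind imp_refl
  le_trans := by rintro ⟨A⟩ ⟨B⟩ ⟨C⟩; exact LProof.trans
  le_antisymm := by rintro ⟨A⟩ ⟨B⟩ h₁ h₂; exact Quotient.sound ⟨h₁, h₂⟩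
  le_total := by rintro ⟨A⟩ ⟨B⟩; exact (Fact.out : IsLinearTheory Φ).prelinear A B
  toDecidableLE := Classical.decRel _
  top := mk Φ bot.neg
  le_top := by rintro ⟨A⟩; exact imp_top A
  bot := mk Φ bot
  bot_le := by rintro ⟨A⟩; exact a7 A
  himp := Quotient.map₂ impl fun _ _ hA _ _ hB =>
    ⟨(imp_anti_left hA.2).trans (imp_mono_right hB.1),
      (imp_anti_left hA.1).trans (imp_mono_right hB.2)⟩
  conj := Quotient.map₂ conj fun _ _ hA _ _ hB => ⟨conj_mono hA.1 hB.1, conj_mono hA.2 hB.2⟩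
  conj_le_left := by rintro ⟨A⟩ ⟨B⟩; exact a2 A B
  conj_comm_le := by rintro ⟨A⟩ ⟨B⟩; exact a3 A B
  conj_assoc_le := by rintro ⟨A⟩ ⟨B⟩ ⟨C⟩; exact conj_assoc A B C
  le_conj_top := by rintro ⟨A⟩; exact conj_top_intro A
  le_himp_iff := by rintro ⟨A⟩ ⟨B⟩ ⟨C⟩; exact ⟨(a5a A B C).mp, (a5b A B C).mp⟩
  conj_himp_le := by rintro ⟨A⟩ ⟨B⟩; exact a4 A B
  himp_bot_himp_bot_le := by rintro ⟨A⟩; exact dn A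

variable [Fact (IsLinearTheory Φ)]

instance : Nontrivial (Lindenbaum Φ) :=
  ⟨⟨mk Φ bot, mk Φ bot.neg, fun h =>
    (Fact.out : IsLinearTheory Φ).consistent ((top_imp bot).mp (Quotient.exact h).2)⟩⟩

theorem proves_of_mk_eq_top {A : LFormula} (h : mk Φ A = ⊤) : LProof Φ A :=
  (Quotient.exact h).2.mp top

end Lindenbaum

def LFormula.subformulas : LFormula → List LFormula
  | var p => [var p]
  | bot => [bot]
  | conj A B => conj A B :: (A.subformulas ++ B.subformulas)
  | impl A B => impl A B :: (A.subformulas ++ B.subformulas)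

theorem LFormula.mem_subformulas_self (A : LFormula) : A ∈ A.subformulas := by
  cases A <;> simp [subformulas]

theorem eval_eq_of_subformulas_subset {S : List LFormula} {π : ℕ → ℝ} {w : LFormula → ℝ}
    (hvar : ∀ p, var p ∈ S → π p = w (var p)) (hbot : w bot = 0)
    (hconj : ∀ A ∈ S, ∀ B ∈ S, w (A & B) = max 0 (w A + w B - 1))
    (himp : ∀ A ∈ S, ∀ B ∈ S, w (A ⇒ B) = min 1 (1 - w A + w B)) :
    ∀ ψ : LFormula, ψ.subformulas ⊆ S → eval π ψ = w ψ := by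
  intro ψ
  induction ψ with
  | var p => exact fun h => hvar p (h (mem_subformulas_self _))
  | bot => exact fun _ => hbot.symm
  | conj A B ihA ihB =>
    intro h
    have hA : A.subformulas ⊆ S := fun x hx => h (by simp [subformulas, hx])
    have hB : B.subformulas ⊆ S := fun x hx => h (by simp [subformulas, hx])
    rw [eval, ihA hA, ihB hB, hconj A (hA (mem_subformulas_self A)) B (hB (mem_subformulas_self B))]
  | impl A B ihA ihB =>
    intro h
    have hA : A.subformulas ⊆ S := fun x hx => h (by simp [subformulas, hx])
    have hB : B.subformulas ⊆ S := fun x hx => h (by simp [subformulas, hx])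
    rw [eval, ihA hA, ihB hB, himp A (hA (mem_subformulas_self A)) B (hB (mem_subformulas_self B))]

theorem Lindenbaum.exists_valuation_eval_ne_one {Φ : Set LFormula} [Fact (IsLinearTheory Φ)]
    {φ : LFormula} (hφ : ¬ LProof Φ φ) : ∃ π, IsValuation π ∧ eval π φ ≠ 1 := by
  classical
  let s : Finset (Lindenbaum Φ) := (φ.subformulas.map (mk Φ)).toFinset
  obtain ⟨v, hv, hv₀, hv₁, hvs⟩ := MVChain.exists_partial_embedding s
  have hs : ∀ A ∈ φ.subformulas, mk Φ A ∈ s :=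
    fun A hA => List.mem_toFinset.2 (List.mem_map_of_mem hA)
  have hs' : ∀ A ∈ φ.subformulas, mk Φ A ∈ insert ⊥ (insert ⊤ (s : Set (Lindenbaum Φ))) :=
    fun A hA => Set.mem_insert_of_mem _ (Set.mem_insert_of_mem _ (hs A hA))
  have hbot : ⊥ ∈ insert ⊥ (insert ⊤ (s : Set (Lindenbaum Φ))) := Set.mem_insert _ _
  have htop : ⊤ ∈ insert ⊥ (insert ⊤ (s : Set (Lindenbaum Φ))) :=
    Set.mem_insert_of_mem _ (Set.mem_insert _ _)
  let π p := if var p ∈ φ.subformulas then v (mk Φ (var p)) else 0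
  have heval : eval π φ = v (mk Φ φ) :=
    eval_eq_of_subformulas_subset (w := v ∘ mk Φ) (fun p hp => if_pos hp) hv₀
      (fun A hA B hB => (hvs _ (hs A hA) _ (hs B hB)).2)
      (fun A hA B hB => (hvs _ (hs A hA) _ (hs B hB)).1) φ (List.Subset.refl _)
  refine ⟨π, fun p => ?_, fun h => hφ (proves_of_mk_eq_top ?_)⟩
  · by_cases hp : var p ∈ φ.subformulas
    · simp only [π, if_pos hp]
      rw [← hv₀, ← hv₁]
      exact ⟨hv.monotoneOn hbot (hs' _ hp) bot_le, hv.monotoneOn (hs' _ hp) htop le_top⟩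
    · simp [π, hp]
  · exact hv.injOn (hs' φ (mem_subformulas_self φ)) htop (heval.symm.trans (h.trans hv₁.symm))

/-- (Theorem 4, Completeness) If `V(φ) = 1` for every valuation `V`, then `⊢ φ`. -/
theorem lukasiewicz_completeness (φ : LFormula)
    (h : ∀ π : ℕ → ℝ, IsValuation π → eval π φ = 1) :
    LProof ∅ φ := by
  by_contra hφ
  obtain ⟨Φ, hΦ, hΦφ⟩ := exists_isLinearTheory_not_proves hφ
  have : Fact (IsLinearTheory Φ) := ⟨hΦ⟩
  obtain ⟨π, hπ, hπφ⟩ := Lindenbaum.exists_valuation_eval_ne_one hΦφ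
  exact hπφ (h π hπ)
end

section
/- (Lemma 2(ii)-1) If Φ is a maximal consistent set of formulas of propositional Łukasiewicz logic, then for all formulas φ and ψ: φ & ψ ∈ Φ if and only if φ ∈ Φ and ψ ∈ Φ. -/
/-
Proof idea: call `σ` *entailed* by `Φ` if `⊢ ψ₁ & ⋯ & ψₙ → σ` for some members `ψᵢ` of `Φ`.
Entailment is closed under `&` (concatenate the two lists, using associativity and
monotonicity of `&`) and under provable implication, and `Φ` is consistent iff it does not
entail `⊥`. If `Φ` is maximal and `σ ∉ Φ` is entailed by `Φ`, then `Φ ∪ {σ}` entails `⊥`;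
replacing `σ` by the members of `Φ` that entail it shows that `Φ` itself entails `⊥`. So a
maximal consistent set contains everything it entails, and both directions of the theorem
follow from `⊢ φ & ψ → φ`, `⊢ φ & ψ → ψ` and `⊢ φ & ψ → φ & ψ`.
-/

open LFormula

namespace LProof

variable {Γ : Set LFormula}

theorem imp_trans {a b c : LFormula} (hab : LProof Γ (a.impl b)) (hbc : LProof Γ (b.impl c)) :
    LProof Γ (a.impl c) :=
  mp (mp (a1 a b c) hab) hbc

theorem imp_comm {a b c : LFormula} (h : LProof Γ (a.impl (b.impl c))) :
    LProof Γ (b.impl (a.impl c)) :=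
  mp (a5b b a c) (imp_trans (a3 b a) (mp (a5a a b c) h))

theorem imp_self (a : LFormula) : LProof Γ (a.impl a) :=
  have h : LProof Γ (a.impl (((bot.conj bot).impl bot).impl a)) := mp (a5b _ _ _) (a2 _ _)
  mp (imp_comm h) (a2 bot bot)

theorem imp_imp_conj (a b : LFormula) : LProof Γ (a.impl (b.impl (a.conj b))) :=
  mp (a5b a b _) (imp_self _)

theorem conj_mono_s3 {a a' b b' : LFormula} (ha : LProof Γ (a.impl a'))
    (hb : LProof Γ (b.impl b')) : LProof Γ ((a.conj b).impl (a'.conj b')) :=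
  mp (a5a _ _ _) (imp_trans ha (imp_trans (imp_imp_conj a' b') (mp (a1 b b' _) hb)))

theorem conj_assoc_s3 (a b c : LFormula) :
    LProof Γ ((a.conj (b.conj c)).impl ((a.conj b).conj c)) :=
  mp (a5a _ _ _) (imp_trans (mp (a5b a b _) (imp_imp_conj (a.conj b) c)) (a5a b c _))

theorem listConj_append_imp (a b : LFormula) (l₁ l₂ : List LFormula) :
    LProof Γ ((listConj a (l₁ ++ b :: l₂)).impl ((listConj a l₁).conj (listConj b l₂))) := by
  induction l₁ generalizing a with
  | nil => exact imp_self _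
  | cons c l₁ ih =>
    exact imp_trans (conj_mono_s3 (imp_self a) (ih c)) (conj_assoc_s3 _ _ _)

end LProof

-- By the local deduction theorem of `Ł` this is derivability from `Φ`; members may be repeated.
def ConjEntails (Φ : Set LFormula) (σ : LFormula) : Prop :=
  ∃ (φ : LFormula) (l : List LFormula), φ ∈ Φ ∧ (∀ ψ ∈ l, ψ ∈ Φ) ∧
    LProof ∅ ((listConj φ l).impl σ)

theorem consistent_iff_not_conjEntails_bot {Φ : Set LFormula} :
    Consistent Φ ↔ ¬ ConjEntails Φ bot := by
  simp only [Consistent, ConjEntails, LFormula.neg, not_exists, not_and]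

namespace ConjEntails

variable {Φ : Set LFormula}

theorem of_mem {σ : LFormula} (h : σ ∈ Φ) : ConjEntails Φ σ :=
  ⟨σ, [], h, by simp, LProof.imp_self σ⟩

theorem mp {σ τ : LFormula} (h : ConjEntails Φ σ) (himp : LProof ∅ (σ.impl τ)) :
    ConjEntails Φ τ :=
  let ⟨φ, l, hφ, hl, hσ⟩ := h
  ⟨φ, l, hφ, hl, LProof.imp_trans hσ himp⟩

theorem conj {σ τ : LFormula} (hσ : ConjEntails Φ σ) (hτ : ConjEntails Φ τ) :
    ConjEntails Φ (σ.conj τ) := by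
  obtain ⟨φ, l, hφ, hl, hφσ⟩ := hσ
  obtain ⟨ψ, m, hψ, hm, hψτ⟩ := hτ
  refine ⟨φ, l ++ ψ :: m, hφ, ?_, ?_⟩
  · simp only [List.mem_append, List.mem_cons]
    rintro χ (hχ | rfl | hχ)
    exacts [hl χ hχ, hψ, hm χ hχ]
  · exact LProof.imp_trans (LProof.listConj_append_imp φ ψ l m) (LProof.conj_mono_s3 hφσ hψτ)

theorem listConj_of_forall_mem {φ : LFormula} {l : List LFormula}
    (h : ∀ ψ ∈ φ :: l, ConjEntails Φ ψ) : ConjEntails Φ (listConj φ l) := by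
  induction l generalizing φ with
  | nil => exact h φ (List.mem_singleton_self φ)
  | cons ψ l ih =>
    exact (h φ List.mem_cons_self).conj (ih fun χ hχ => h χ (List.mem_cons_of_mem φ hχ))

theorem trans {Γ : Set LFormula} {σ : LFormula} (h : ConjEntails Γ σ)
    (hΓ : ∀ ψ ∈ Γ, ConjEntails Φ ψ) : ConjEntails Φ σ := by
  obtain ⟨φ, l, hφ, hl, hσ⟩ := h
  refine (listConj_of_forall_mem fun ψ hψ => hΓ ψ ?_).mp hσ
  rcases List.mem_cons.mp hψ with rfl | hψ
  exacts [hφ, hl ψ hψ]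

end ConjEntails

theorem MaximalConsistent.mem_of_conjEntails {Φ : Set LFormula} (h : MaximalConsistent Φ)
    {σ : LFormula} (hσ : ConjEntails Φ σ) : σ ∈ Φ := by
  by_contra hσΦ
  have hbot : ConjEntails (Φ ∪ {σ}) bot :=
    consistent_iff_not_conjEntails_bot.not_left.mp (h.2 σ hσΦ)
  refine consistent_iff_not_conjEntails_bot.mp h.1 (hbot.trans ?_)
  rintro ψ (hψ | rfl)
  exacts [ConjEntails.of_mem hψ, hσ]

/-- (Lemma 2(ii)-1) In a maximal consistent set, `φ & ψ ∈ Φ` iff `φ ∈ Φ` and `ψ ∈ Φ`. -/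
theorem maximal_conj_mem (Φ : Set LFormula) (h : MaximalConsistent Φ)
    (φ ψ : LFormula) :
    φ.conj ψ ∈ Φ ↔ (φ ∈ Φ ∧ ψ ∈ Φ) := by
  constructor
  · intro hφψ
    have hφψ' := ConjEntails.of_mem hφψ
    exact ⟨h.mem_of_conjEntails (hφψ'.mp (LProof.a2 φ ψ)),
      h.mem_of_conjEntails (hφψ'.mp (LProof.imp_trans (LProof.a3 φ ψ) (LProof.a2 ψ φ)))⟩
  · rintro ⟨hφ, hψ⟩
    exact h.mem_of_conjEntails ((ConjEntails.of_mem hφ).conj (ConjEntails.of_mem hψ))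
end
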